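/- arXiv:2111.14642 — 2 statements merged into one kernel-verified Lean document; each statement's English description precedes it below -/
import Mathlib

section
/- Let 0 = t_0 < t_1 < ⋯ < t_N = T be a partition of (0,T], and let V^q be the space of functions v : (0,T] → H_0^1(Ω) that restrict on each I_n = (t_{n-1}, t_n] to a polynomial in t of degree ≤ q_n with coefficients in H_0^1(Ω). Define |||v|||^2 := (1/2)‖v̇(0^+)‖²_{L²} + (1/2)Σ_{n=1}^{N-1}‖[v̇]_n‖²_{L²} + (1/2)‖v̇(t_N^-)‖²_{L²} + Σ_{n=1}^N ∫_{I_n}‖v̇‖²_{L²} dt + (1/2)‖∇v(0^+)‖²_{L²} + (1/2)Σ_{n=1}^{N-1}‖∇[v]_n‖²_{L²} + (1/2)‖∇v(t_N^-)‖²_{L²}, where [w]_n = w(t_n^+) - w(t_n^-) (with the convention v(0^-)=0, v̇(0^-)=0 for the norm property). Then ||| · ||| is a norm on V^q; in particular |||v||| = 0 implies v ≡ 0 on (0,T]. -/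
open MeasureTheory
open scoped RealInnerProductSpace

open Set

/-!
On each time slab the term `∫_{I_n} ‖v̇‖²` forces `v̇ = 0`, so every polynomial piece is
constant on its closed slab. The term `‖v(0⁺)‖²` makes the first piece vanish, and the
vanishing jump terms `‖[v]_n‖²` pass the value `0` from one slab to the next.
-/

theorem eqOn_zero_of_intervalIntegral_eq_zero {f : ℝ → ℝ} {a b : ℝ} (hab : a < b)
    (hf : ContinuousOn f (Icc a b)) (hf₀ : ∀ x ∈ Icc a b, 0 ≤ f x)
    (h : ∫ x in a..b, f x = 0) : EqOn f 0 (Icc a b) := by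
  intro c hc
  by_contra hne
  have hpos := intervalIntegral.integral_pos hab hf (fun x hx => hf₀ x (Ioc_subset_Icc_self hx))
    ⟨c, hc, (hf₀ c hc).lt_of_ne' hne⟩
  exact hpos.ne' h

theorem eq_of_hasDerivAt_eq_zero_on_Icc {V : Type*} [NormedAddCommGroup V] [NormedSpace ℝ V]
    {f : ℝ → V} {a b : ℝ} (hf : ∀ x ∈ Icc a b, HasDerivAt f 0 x) :
    ∀ x ∈ Icc a b, f x = f a :=
  constant_of_has_deriv_right_zero (fun x hx => (hf x hx).continuousAt.continuousWithinAt)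
    fun x hx => (hf x (Ico_subset_Icc_self hx)).hasDerivWithinAt

theorem eq_of_intervalIntegral_norm_sq_deriv_add_eq_zero {V H : Type*}
    [NormedAddCommGroup V] [NormedSpace ℝ V] [NormedAddCommGroup H] [NormedSpace ℝ H]
    {ι : V →L[ℝ] H} (hι : Function.Injective ι) {f : ℝ → V} (hf : ContDiff ℝ 1 f)
    {a b K : ℝ} (hab : a < b) (hK : 0 ≤ K)
    (h : ∫ s in a..b, ‖ι (deriv f s)‖ ^ 2 + K = 0) :
    (∀ x ∈ Icc a b, f x = f a) ∧ K = 0 := by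
  have hcont : Continuous (deriv f) := hf.continuous_deriv le_rfl
  have hzero : ∀ x ∈ Icc a b, ι (deriv f x) = 0 ∧ K = 0 := fun x hx => by
    have := eqOn_zero_of_intervalIntegral_eq_zero hab (by fun_prop)
      (fun _ _ => by positivity) h hx
    simpa using (add_eq_zero_iff_of_nonneg (by positivity) hK).mp this
  refine ⟨eq_of_hasDerivAt_eq_zero_on_Icc fun x hx => ?_, (hzero a (left_mem_Icc.mpr hab.le)).2⟩
  rw [← map_eq_zero_iff ι hι |>.mp (hzero x hx).1]
  exact (hf.differentiable one_ne_zero x).hasDerivAt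

theorem exists_mem_Ioc_succ_of_mem_Ioc {α : Type*} [LinearOrder α] (t : ℕ → α) {s : α} :
    ∀ {N : ℕ}, s ∈ Ioc (t 0) (t N) → ∃ n < N, s ∈ Ioc (t n) (t (n + 1))
  | 0, hs => absurd hs.2 (not_le.mpr hs.1)
  | N + 1, hs => by
    by_cases hsN : s ≤ t N
    · obtain ⟨n, hn, hmem⟩ := exists_mem_Ioc_succ_of_mem_Ioc t ⟨hs.1, hsN⟩
      exact ⟨n, by omega, hmem⟩
    · exact ⟨N, by omega, not_le.mp hsN, hs.2⟩

theorem eq_of_const_on_Icc_of_jump_eq {X : Type*} {p : ℕ → ℝ → X} {t : ℕ → ℝ}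
    {N : ℕ} {c : X}
    (hmono : ∀ n < N, t n ≤ t (n + 1))
    (hconst : ∀ n < N, ∀ x ∈ Icc (t n) (t (n + 1)), p (n + 1) x = p (n + 1) (t n))
    (hstart : p 1 (t 0) = c) (hjump : ∀ n ∈ Finset.Ico 1 N, p (n + 1) (t n) = p n (t n)) :
    ∀ n < N, ∀ x ∈ Icc (t n) (t (n + 1)), p (n + 1) x = c := by
  intro n
  induction n with
  | zero => intro _ x hx; rw [hconst 0 (by omega) x hx, hstart]
  | succ n ih =>
    intro hn x hx
    rw [hconst (n + 1) hn x hx, hjump (n + 1) (Finset.mem_Ico.mpr ⟨by omega, hn⟩)]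
    exact ih (by omega) _ (right_mem_Icc.mpr (hmono n (by omega)))

/-- `V` plays the role of `H₀¹(Ω)` with the gradient norm, and `ι` is the embedding into
`H = L²(Ω)`; `p n` is the polynomial piece of `v` on the slab `(t (n - 1), t n]`. -/
theorem energy_norm_definite {V H : Type*} [NormedAddCommGroup V] [InnerProductSpace ℝ V]
    [NormedAddCommGroup H] [InnerProductSpace ℝ H]
    (ι : V →L[ℝ] H) (hι : Function.Injective ι)
    (N : ℕ) (hN : 1 ≤ N) (T : ℝ) (t : ℕ → ℝ)
    (ht0 : t 0 = 0) (htN : t N = T) (hmono : ∀ n < N, t n < t (n + 1))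
    (q : ℕ → ℕ) (p : ℕ → ℝ → V)
    (hp : ∀ n, 1 ≤ n → n ≤ N →
      ∃ c : ℕ → V, ∀ s, p n s = ∑ k ∈ Finset.range (q n + 1), s ^ k • c k)
    (v : ℝ → V)
    (hv : ∀ n, 1 ≤ n → n ≤ N → ∀ s ∈ Set.Ioc (t (n - 1)) (t n), v s = p n s)
    (hnorm :
      (1 / 2) * ‖ι (deriv (p 1) (t 0))‖ ^ 2
      + (1 / 2) * ∑ n ∈ Finset.Ico 1 N, ‖ι (deriv (p (n + 1)) (t n) - deriv (p n) (t n))‖ ^ 2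
      + (1 / 2) * ‖ι (deriv (p N) (t N))‖ ^ 2
      + ∑ n ∈ Finset.Icc 1 N, ∫ s in (t (n - 1))..(t n), ‖ι (deriv (p n) s)‖ ^ 2
      + (1 / 2) * ‖p 1 (t 0)‖ ^ 2
      + (1 / 2) * ∑ n ∈ Finset.Ico 1 N, ‖p (n + 1) (t n) - p n (t n)‖ ^ 2
      + (1 / 2) * ‖p N (t N)‖ ^ 2 = 0) :
    ∀ s ∈ Set.Ioc (0 : ℝ) T, v s = 0 := by
  set E := (1 / 2) * ‖p 1 (t 0)‖ ^ 2
  set F := (1 / 2) * ∑ n ∈ Finset.Ico 1 N, ‖p (n + 1) (t n) - p n (t n)‖ ^ 2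
  set G := (1 / 2) * ‖p N (t N)‖ ^ 2
  have hslab : ∀ n ∈ Finset.Icc 1 N, t (n - 1) < t n := fun n hn => by
    obtain ⟨h1, h2⟩ := Finset.mem_Icc.mp hn
    simpa only [Nat.sub_add_cancel h1] using hmono (n - 1) (by omega)
  -- The binder of `∫` in `hnorm` extends to the end, so `E + F + G` is integrated as well.
  have hint_nonneg : ∀ n ∈ Finset.Icc 1 N,
      0 ≤ ∫ s in (t (n - 1))..(t n), ‖ι (deriv (p n) s)‖ ^ 2 + E + F + G :=
    fun n hn => intervalIntegral.integral_nonneg (hslab n hn).le fun _ _ => by positivity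
  obtain ⟨-, hint⟩ :=
    (add_eq_zero_iff_of_nonneg (by positivity) (Finset.sum_nonneg hint_nonneg)).mp hnorm
  have hpiece : ∀ m < N,
      (∀ x ∈ Icc (t m) (t (m + 1)), p (m + 1) x = p (m + 1) (t m)) ∧ E + (F + G) = 0 := by
    intro m hm
    obtain ⟨c, hc⟩ := hp (m + 1) (by omega) hm
    refine eq_of_intervalIntegral_norm_sq_deriv_add_eq_zero hι (funext hc ▸ by fun_prop)
      (hmono m hm) (by positivity) ?_
    simpa [add_assoc] using
      (Finset.sum_eq_zero_iff_of_nonneg hint_nonneg).mp hint (m + 1)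
        (Finset.mem_Icc.mpr ⟨by omega, by omega⟩)
  obtain ⟨hE, hFG⟩ :=
    (add_eq_zero_iff_of_nonneg (by positivity) (by positivity)).mp (hpiece 0 hN).2
  obtain ⟨hF, -⟩ := (add_eq_zero_iff_of_nonneg (by positivity) (by positivity)).mp hFG
  intro s hs
  obtain ⟨n, hn, hsn⟩ := exists_mem_Ioc_succ_of_mem_Ioc t (ht0 ▸ htN ▸ hs)
  rw [hv (n + 1) (by omega) hn s (by simpa using hsn)]
  refine eq_of_const_on_Icc_of_jump_eq (fun n hn => (hmono n hn).le)
    (fun n hn => (hpiece n hn).1) ?_ ?_ n hn s (Ioc_subset_Icc_self hsn)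
  · simpa [E] using hE
  · simpa [F, Finset.sum_eq_zero_iff_of_nonneg, sub_eq_zero] using hF
end

section
/- Let H be a Hilbert space, I_n = (t_{n-1}, t_n], and consider the finite-dimensional local DG problem: find u in the space of H_h-valued polynomials of degree ≤ q_n on I_n (H_h a finite-dimensional subspace of H_0^1(Ω)) such that ∫_{I_n}⟨ü, v̇⟩ dt + ∫_{I_n}(u̇, v̇)_{L²} dt + ∫_{I_n}(∇u, ∇v̇)_{L²} dt + (u̇(t_{n-1}^+), v̇(t_{n-1}^+))_{L²} + (∇u(t_{n-1}^+), ∇v(t_{n-1}^+))_{L²} = RHS(v) for all test polynomials v. If RHS ≡ 0 then u ≡ 0; consequently the local problem has a unique solution for any given data. -/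
/-!
Testing the homogeneous problem with `v = u` and integrating the terms `⟪ü, u̇⟫` and `⟪u, u̇⟫`
by the fundamental theorem of calculus turns its left-hand side into
`(‖ι u̇(b)‖² + ‖ι u̇(a)‖² + ‖u(b)‖² + ‖u(a)‖²) / 2 + ∫ ‖ι u̇‖²`, a sum of nonnegative terms.
Hence `u(a) = 0` and `ι u̇ = 0` on `[a, b]`; injectivity of `ι` makes `u` constant, so zero, on
`[a, b]`, and a polynomial vanishing on an interval vanishes everywhere.
-/

open MeasureTheory Set
open scoped RealInnerProductSpace

theorem analyticOnNhd_sum_pow_smul {𝕜 V : Type*} [NontriviallyNormedField 𝕜]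
    [NormedAddCommGroup V] [NormedSpace 𝕜 V] (S : Finset ℕ) (c : ℕ → V) :
    AnalyticOnNhd 𝕜 (fun s : 𝕜 => ∑ k ∈ S, s ^ k • c k) univ :=
  fun _ _ => by fun_prop

theorem AnalyticOnNhd.eq_zero_of_eqOn_Icc {V : Type*} [NormedAddCommGroup V] [NormedSpace ℝ V]
    {u : ℝ → V} (hu : AnalyticOnNhd ℝ u univ) {a b : ℝ} (hab : a < b)
    (h : EqOn u 0 (Icc a b)) : u = 0 := by
  have hnhds : u =ᶠ[nhds ((a + b) / 2)] 0 :=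
    Filter.eventually_of_mem (Icc_mem_nhds (by linarith) (by linarith)) h
  exact funext fun s =>
    hu.eqOn_zero_of_preconnected_of_eventuallyEq_zero isPreconnected_univ (mem_univ _) hnhds
      (mem_univ s)

theorem eqOn_zero_of_integral_norm_sq_eq_zero {E : Type*} [NormedAddCommGroup E] {g : ℝ → E}
    {a b : ℝ} (hab : a < b) (hg : ContinuousOn g (Icc a b)) (h : ∫ s in a..b, ‖g s‖ ^ 2 = 0) :
    EqOn g 0 (Icc a b) := by
  have hcont : ContinuousOn (fun s => ‖g s‖ ^ 2) (Icc a b) := hg.norm.pow 2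
  have hae : (fun s => ‖g s‖ ^ 2) =ᵐ[volume.restrict (Icc a b)] 0 := by
    rw [← Measure.restrict_congr_set Ioc_ae_eq_Icc]
    refine (intervalIntegral.integral_eq_zero_iff_of_le_of_nonneg_ae hab.le
      (Filter.Eventually.of_forall fun s => by positivity) ?_).mp h
    exact ContinuousOn.intervalIntegrable (by rwa [uIcc_of_le hab.le])
  intro s hs
  simpa using Measure.eqOn_Icc_of_ae_eq volume hab.ne hae hcont continuousOn_const hs

theorem integral_inner_of_hasDerivAt {E : Type*} [NormedAddCommGroup E] [InnerProductSpace ℝ E]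
    {f f' : ℝ → E} {a b : ℝ} (hf : ∀ s ∈ uIcc a b, HasDerivAt f (f' s) s)
    (hint : IntervalIntegrable (fun s => ⟪f s, f' s⟫) volume a b) :
    ∫ s in a..b, ⟪f s, f' s⟫ = (‖f b‖ ^ 2 - ‖f a‖ ^ 2) / 2 := by
  have hderiv : ∀ s ∈ uIcc a b, HasDerivAt (fun s => ‖f s‖ ^ 2 / 2) ⟪f s, f' s⟫ s := by
    intro s hs
    simpa using ((hf s hs).norm_sq).div_const 2
  rw [intervalIntegral.integral_eq_sub_of_hasDerivAt hderiv hint]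
  ring

theorem energy_identity {V H : Type*} [NormedAddCommGroup V] [InnerProductSpace ℝ V]
    [NormedAddCommGroup H] [InnerProductSpace ℝ H] (ι : V →L[ℝ] H) {u : ℝ → V}
    (hu : ContDiff ℝ 2 u) (a b : ℝ) :
    (∫ s in a..b, ⟪ι (deriv (deriv u) s), ι (deriv u s)⟫)
        + (∫ s in a..b, ⟪ι (deriv u s), ι (deriv u s)⟫)
        + (∫ s in a..b, ⟪u s, deriv u s⟫)
        + ⟪ι (deriv u a), ι (deriv u a)⟫ + ⟪u a, u a⟫
      = (‖ι (deriv u b)‖ ^ 2 + ‖ι (deriv u a)‖ ^ 2 + ‖u b‖ ^ 2 + ‖u a‖ ^ 2) / 2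
        + ∫ s in a..b, ‖ι (deriv u s)‖ ^ 2 := by
  have hu_diff : Differentiable ℝ u := hu.differentiable two_ne_zero
  have hu' : Continuous (deriv u) := hu.continuous_deriv one_le_two
  have hu'_diff : Differentiable ℝ (deriv u) := hu.differentiable_deriv_two
  have hu'' : Continuous (deriv (deriv u)) := hu.deriv'.continuous_deriv_one
  have hιu' : ∀ s, HasDerivAt (fun s => ι (deriv u s)) (ι (deriv (deriv u) s)) s :=
    fun s => ι.hasFDerivAt.comp_hasDerivAt s (hu'_diff s).hasDerivAt
  have hkinetic : (∫ s in a..b, ⟪ι (deriv (deriv u) s), ι (deriv u s)⟫)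
      = (‖ι (deriv u b)‖ ^ 2 - ‖ι (deriv u a)‖ ^ 2) / 2 := by
    rw [intervalIntegral.integral_congr fun s _ =>
      real_inner_comm (ι (deriv u s)) (ι (deriv (deriv u) s))]
    exact integral_inner_of_hasDerivAt (fun s _ => hιu' s)
      (((ι.continuous.comp hu').inner (𝕜 := ℝ) (ι.continuous.comp hu'')).intervalIntegrable a b)
  have hpotential : (∫ s in a..b, ⟪u s, deriv u s⟫) = (‖u b‖ ^ 2 - ‖u a‖ ^ 2) / 2 :=
    integral_inner_of_hasDerivAt (fun s _ => (hu_diff s).hasDerivAt)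
      ((hu_diff.continuous.inner (𝕜 := ℝ) hu').intervalIntegrable a b)
  simp only [hkinetic, hpotential, real_inner_self_eq_norm_sq]
  ring

/-- The homogeneous local DG problem has only the trivial solution. -/
theorem local_problem_trivial {V H : Type*} [NormedAddCommGroup V] [InnerProductSpace ℝ V]
    [NormedAddCommGroup H] [InnerProductSpace ℝ H]
    (ι : V →L[ℝ] H) (hι : Function.Injective ι)
    (a b : ℝ) (hab : a < b) (q : ℕ) (u : ℝ → V)
    (hu : ∃ c : ℕ → V, ∀ s, u s = ∑ k ∈ Finset.range (q + 1), s ^ k • c k)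
    (hom : ∀ v : ℝ → V,
      (∃ d : ℕ → V, ∀ s, v s = ∑ k ∈ Finset.range (q + 1), s ^ k • d k) →
      (∫ s in a..b, ⟪ι (deriv (deriv u) s), ι (deriv v s)⟫)
        + (∫ s in a..b, ⟪ι (deriv u s), ι (deriv v s)⟫)
        + (∫ s in a..b, ⟪u s, deriv v s⟫)
        + ⟪ι (deriv u a), ι (deriv v a)⟫ + ⟪u a, v a⟫ = 0) :
    ∀ s, u s = 0 := by
  obtain ⟨c, hc⟩ := hu
  have hu_an : AnalyticOnNhd ℝ u univ := funext hc ▸ analyticOnNhd_sum_pow_smul _ c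
  have hu_C2 : ContDiff ℝ 2 u := hu_an.contDiff
  have henergy := (hom u ⟨c, hc⟩).symm.trans (energy_identity ι hu_C2 a b)
  have hdissipation : 0 ≤ ∫ s in a..b, ‖ι (deriv u s)‖ ^ 2 :=
    intervalIntegral.integral_nonneg hab.le fun s _ => by positivity
  obtain ⟨hua, hdiss0⟩ : ‖u a‖ ^ 2 = 0 ∧ ∫ s in a..b, ‖ι (deriv u s)‖ ^ 2 = 0 := by
    constructor <;> linarith [sq_nonneg ‖ι (deriv u b)‖, sq_nonneg ‖ι (deriv u a)‖,
      sq_nonneg ‖u b‖, sq_nonneg ‖u a‖]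
  have hu' : ∀ s ∈ Icc a b, deriv u s = 0 := fun s hs => hι <| by
    simpa using eqOn_zero_of_integral_norm_sq_eq_zero hab
      (ι.continuous.comp (hu_C2.continuous_deriv one_le_two)).continuousOn hdiss0 hs
  have hu_Icc : EqOn u 0 (Icc a b) := fun s hs =>
    (constant_of_has_deriv_right_zero hu_C2.continuous.continuousOn
      (fun x hx => hu' x (Ico_subset_Icc_self hx) ▸
        (hu_C2.differentiable two_ne_zero x).hasDerivAt.hasDerivWithinAt) s hs).trans
      (by simpa using hua)
  exact congrFun (hu_an.eq_zero_of_eqOn_Icc hab hu_Icc)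
end
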